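/- arXiv:1811.05555 — 2 statements merged into one kernel-verified Lean document; each statement's English description precedes it below -/
import Mathlib

section
/- Let c ∈ ℝ with c ≠ 0, let g : ℝ → ℝ be a bounded Lebesgue-measurable function, and let M ⊆ ℝ be a set with nonempty interior. If ∫_ℝ g(c(m + e)) φ(e) de = 0 for every m ∈ M, where φ(e) = (2π)^{-1/2} exp(−e²/2) is the standard normal density, then g = 0 Lebesgue-almost everywhere. -/
/-!
Substituting `u = m + e`, the hypothesis says that `m ↦ ∫ g(cu) e^{mu} dν(u)` vanishes on `M`,
where `ν` is the standard Gaussian measure. Let `μ₊` and `μ₋` be the measures with densities the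
positive and negative parts of `g(c·)` with respect to `ν`. As `g` is bounded, both have moment
generating functions finite on all of `ℝ`, so their complex MGFs are entire. These agree at the
real points of `M`, which accumulate in `ℂ`, hence everywhere by the identity theorem, and then
`μ₊ = μ₋` because complex MGFs determine finite measures. So `g(c·) = 0` `ν`-a.e., and `ν` has
the same null sets as Lebesgue measure.
-/

open MeasureTheory

/-- The standard normal density `φ(t) = (2π)^{-1/2} exp(-t²/2)`. -/
noncomputable def stdNormalPDF (t : ℝ) : ℝ :=
  (Real.sqrt (2 * Real.pi))⁻¹ * Real.exp (-t ^ 2 / 2)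

open ProbabilityTheory Filter Topology Set

theorem AnalyticOnNhd.eq_of_forall_ofReal_eq {f g : ℂ → ℂ} (hf : AnalyticOnNhd ℂ f univ)
    (hg : AnalyticOnNhd ℂ g univ) {M : Set ℝ} (hM : (interior M).Nonempty)
    (hfg : ∀ x ∈ M, f x = g x) : f = g := by
  obtain ⟨x₀, hx₀⟩ := hM
  have hreal : ∃ᶠ x : ℝ in 𝓝[≠] x₀, f x = g x :=
    (eventually_nhdsWithin_of_eventually_nhds
      (eventually_of_mem (mem_interior_iff_mem_nhds.1 hx₀) hfg)).frequently
  have hofReal : Tendsto ((↑) : ℝ → ℂ) (𝓝[≠] x₀) (𝓝[≠] (x₀ : ℂ)) :=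
    Complex.continuous_ofReal.continuousWithinAt.tendsto_nhdsWithin fun _ _ ↦ by simp_all
  exact hf.eq_of_frequently_eq hg (hofReal.frequently hreal)

section WithDensity

variable {μ : Measure ℝ} {f : ℝ → ℝ}

theorem mgf_id_withDensity_ofReal (hfm : Measurable f) (t : ℝ) :
    mgf id (μ.withDensity fun x ↦ ENNReal.ofReal (f x)) t
      = ∫ x, max (f x) 0 * Real.exp (t * x) ∂μ := by
  refine (integral_withDensity_eq_integral_smul hfm.real_toNNReal _).trans ?_
  simp [NNReal.smul_def, Real.coe_toNNReal']

theorem MeasureTheory.Integrable.max_zero_mul_exp {t : ℝ}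
    (hf : Integrable (fun x ↦ f x * Real.exp (t * x)) μ) :
    Integrable (fun x ↦ max (f x) 0 * Real.exp (t * x)) μ := by
  simpa only [max_mul_of_nonneg _ _ (Real.exp_pos _).le, zero_mul] using hf.pos_part

theorem integrableExpSet_id_withDensity_ofReal (hfm : Measurable f)
    (hf : ∀ t, Integrable (fun x ↦ f x * Real.exp (t * x)) μ) :
    integrableExpSet id (μ.withDensity fun x ↦ ENNReal.ofReal (f x)) = univ :=
  eq_univ_of_forall fun t ↦ (integrable_withDensity_iff_integrable_smul hfm.real_toNNReal).2 <| by
    simpa only [NNReal.smul_def, smul_eq_mul, Real.coe_toNNReal', id] using (hf t).max_zero_mul_exp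

theorem analyticOnNhd_complexMGF_id_withDensity_ofReal (hfm : Measurable f)
    (hf : ∀ t, Integrable (fun x ↦ f x * Real.exp (t * x)) μ) :
    AnalyticOnNhd ℂ (complexMGF id (μ.withDensity fun x ↦ ENNReal.ofReal (f x))) univ := by
  simpa [integrableExpSet_id_withDensity_ofReal hfm hf] using
    analyticOnNhd_complexMGF (X := id) (μ := μ.withDensity fun x ↦ ENNReal.ofReal (f x))

end WithDensity

theorem ae_eq_zero_of_integral_mul_exp_eq_zero {μ : Measure ℝ} {f : ℝ → ℝ} (hfm : Measurable f)
    (hf : ∀ t, Integrable (fun x ↦ f x * Real.exp (t * x)) μ) {M : Set ℝ}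
    (hM : (interior M).Nonempty) (h : ∀ t ∈ M, ∫ x, f x * Real.exp (t * x) ∂μ = 0) :
    f =ᵐ[μ] 0 := by
  have hfi : Integrable f μ := by simpa using hf 0
  have hnf : ∀ t, Integrable (fun x ↦ -f x * Real.exp (t * x)) μ := fun t ↦ by
    simpa only [neg_mul] using (hf t).fun_neg
  have : IsFiniteMeasure (μ.withDensity fun x ↦ ENNReal.ofReal (f x)) :=
    isFiniteMeasure_withDensity_ofReal hfi.2
  have : IsFiniteMeasure (μ.withDensity fun x ↦ ENNReal.ofReal (-f x)) :=
    isFiniteMeasure_withDensity_ofReal hfi.neg.2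
  have hmgf : ∀ t ∈ M, mgf id (μ.withDensity fun x ↦ ENNReal.ofReal (f x)) t
      = mgf id (μ.withDensity fun x ↦ ENNReal.ofReal (-f x)) t := fun t ht ↦ by
    rw [mgf_id_withDensity_ofReal hfm, mgf_id_withDensity_ofReal (f := fun x ↦ -f x) hfm.neg,
      ← sub_eq_zero, ← integral_sub (hf t).max_zero_mul_exp (hnf t).max_zero_mul_exp]
    simpa only [← sub_mul, max_zero_sub_max_neg_zero_eq_self] using h t ht
  have hcmgf := AnalyticOnNhd.eq_of_forall_ofReal_eq
    (analyticOnNhd_complexMGF_id_withDensity_ofReal hfm hf)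
    (analyticOnNhd_complexMGF_id_withDensity_ofReal (f := fun x ↦ -f x) hfm.neg hnf) hM
    fun x hx ↦ by rw [complexMGF_ofReal, complexMGF_ofReal, hmgf x hx]
  have hdens := (withDensity_eq_iff hfm.ennreal_ofReal.aemeasurable
    hfm.neg.ennreal_ofReal.aemeasurable hfi.lintegral_lt_top.ne).1
    (Measure.ext_of_complexMGF_id_eq hcmgf)
  filter_upwards [hdens] with x hx
  simp only [Pi.neg_apply, Pi.zero_apply] at hx ⊢
  rcases le_total (f x) 0 with hx0 | hx0
  · rw [ENNReal.ofReal_of_nonpos hx0, eq_comm, ENNReal.ofReal_eq_zero] at hx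
    exact le_antisymm hx0 (neg_nonpos.1 hx)
  · rw [ENNReal.ofReal_of_nonpos (neg_nonpos.2 hx0), ENNReal.ofReal_eq_zero] at hx
    exact le_antisymm hx hx0

theorem stdNormalPDF_eq_gaussianPDFReal : stdNormalPDF = gaussianPDFReal 0 1 := by
  ext t
  simp [stdNormalPDF, gaussianPDFReal]

theorem stdNormalPDF_add_mul_exp (m e : ℝ) :
    stdNormalPDF (m + e) * Real.exp (m * (m + e)) = Real.exp (m ^ 2 / 2) * stdNormalPDF e := by
  have : -(m + e) ^ 2 / 2 + m * (m + e) = m ^ 2 / 2 + -e ^ 2 / 2 := by ring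
  rw [stdNormalPDF, stdNormalPDF, mul_assoc, ← Real.exp_add, this, Real.exp_add]
  ring

theorem integral_mul_exp_gaussianReal (f : ℝ → ℝ) (m : ℝ) :
    ∫ x, f x * Real.exp (m * x) ∂gaussianReal 0 1
      = Real.exp (m ^ 2 / 2) * ∫ e, f (m + e) * stdNormalPDF e := by
  rw [integral_gaussianReal_eq_integral_smul one_ne_zero, ← stdNormalPDF_eq_gaussianPDFReal,
    ← integral_add_left_eq_self (fun x ↦ stdNormalPDF x • (f x * Real.exp (m * x))) m,
    ← integral_const_mul]
  congr 1 with e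
  rw [smul_eq_mul, mul_left_comm, stdNormalPDF_add_mul_exp]
  ring

theorem ae_of_ae_comp_mul_left {c : ℝ} (hc : c ≠ 0) {p : ℝ → Prop}
    (h : ∀ᵐ u, p (c * u)) : ∀ᵐ t, p t := by
  simpa [hc, smul_eq_mul] using (Measure.quasiMeasurePreserving_smul volume (inv_ne_zero hc)).ae h

/-- bounded completeness of the scaled Gaussian index family
`v = c (m + e)`, `e` standard normal, `c ≠ 0` a fixed scale, mean `m` ranging
over a set with nonempty interior. -/
theorem scaled_gaussian_bounded_complete
    (c : ℝ) (hc : c ≠ 0)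
    (g : ℝ → ℝ) (hgm : Measurable g) (hgb : ∃ C : ℝ, ∀ t, |g t| ≤ C)
    (M : Set ℝ) (hM : (interior M).Nonempty)
    (hzero : ∀ m ∈ M, ∫ e : ℝ, g (c * (m + e)) * stdNormalPDF e = 0) :
    ∀ᵐ t : ℝ ∂volume, g t = 0 := by
  obtain ⟨C, hC⟩ := hgb
  have hfm : Measurable fun u ↦ g (c * u) := hgm.comp (measurable_const_mul c)
  have hint : ∀ t, Integrable (fun u ↦ g (c * u) * Real.exp (t * u)) (gaussianReal 0 1) :=
    fun t ↦ (integrable_exp_mul_gaussianReal t).bdd_mul hfm.aestronglyMeasurable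
      (ae_of_all _ fun u ↦ hC (c * u))
  have hmom : ∀ m ∈ M, ∫ u, g (c * u) * Real.exp (m * u) ∂gaussianReal 0 1 = 0 := by
    intro m hm
    rw [integral_mul_exp_gaussianReal, hzero m hm, mul_zero]
  have hf0 := ae_eq_zero_of_integral_mul_exp_eq_zero hfm hint hM hmom
  exact ae_of_ae_comp_mul_left hc
    ((gaussianReal_absolutelyContinuous' 0 one_ne_zero).ae_le hf0)
end

section
/- Let J ≥ 1 and let Y = {0,1}^J ∖ {0} be the set of nonempty bundles. Let F, G : ℝ^Y → ℝ be bounded Lebesgue-measurable functions, let β_0 ∈ ℝ and β_1 ≠ 0, let Z_2 ⊆ ℝ^J and let Z_1 ⊆ ℝ have nonempty interior. For y ∈ Y and z_2 ∈ ℝ^J write s(y, z_2) = Σ_{j=1}^J y_j z_{2,j}. Suppose that for every z_1 ∈ Z_1 and z_2 ∈ Z_2: ∫_ℝ F((−v·s(y,z_2))_{y∈Y}) φ(v − β_0 − β_1 z_1) dv = ∫_ℝ G((−v·s(y,z_2))_{y∈Y}) φ(v − β_0 − β_1 z_1) dv, where φ is the standard normal density. Then for every z_2 ∈ Z_2: F((−v·s(y,z_2))_{y∈Y})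 = G((−v·s(y,z_2))_{y∈Y}) for Lebesgue-almost every v ∈ ℝ. -/
open MeasureTheory

/-- The set of nonempty bundles of `J` goods, `Y = {0,1}^J ∖ {0}`. -/
def Bundle (J : ℕ) : Type := {y : Fin J → Bool // y ≠ fun _ => false}

/-- `s(y, z₂) = ∑_{j=1}^J y_j z_{2,j}`, the total characteristic of bundle `y`. -/
def bundleSum {J : ℕ} (y : Fin J → Bool) (z₂ : Fin J → ℝ) : ℝ :=
  ∑ j : Fin J, if y j then z₂ j else 0

/-! Put `h v = F(A v) − G(A v)` with `A v = (−v·s(y,z₂))_y`. Substituting `c = β₀ + β₁ z₁`, the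
hypothesis says that `h` integrates to zero against the normal density `φ(· − c)` for every `c`
in a nonempty open set. Since `e^{tv} φ(v) = e^{t²/2} φ(v − t)`, this is the vanishing of the
two-sided Laplace transform of `h φ` on an open set. The positive and negative parts of `h φ` are
densities of two finite measures with all exponential moments; their moment generating functions
are real analytic on all of `ℝ` and agree on an open set, hence everywhere, so the measures
coincide and `h φ`, hence `h`, vanishes almost everywhere. -/

open ProbabilityTheory Set Filter Real
open scoped NNReal ENNReal

theorem MeasureTheory.Measure.ext_of_mgf_eqOn {μ ν : Measure ℝ} [IsFiniteMeasure μ]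
    [IsFiniteMeasure ν] (hμ : integrableExpSet id μ = univ) (hν : integrableExpSet id ν = univ)
    {U : Set ℝ} (hU : IsOpen U) (hUne : U.Nonempty) (h : EqOn (mgf id μ) (mgf id ν) U) :
    μ = ν := by
  obtain ⟨t₀, ht₀⟩ := hUne
  have hμa : AnalyticOnNhd ℝ (mgf id μ) univ := by
    simpa [hμ] using analyticOnNhd_mgf (X := id) (μ := μ)
  have hνa : AnalyticOnNhd ℝ (mgf id ν) univ := by
    simpa [hν] using analyticOnNhd_mgf (X := id) (μ := ν)
  have hmgf : mgf id μ = mgf id ν := funext fun t =>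
    hμa.eqOn_of_preconnected_of_eventuallyEq hνa isPreconnected_univ (mem_univ t₀)
      (eventually_of_mem (hU.mem_nhds ht₀) h) (mem_univ t)
  have hzero : μ = 0 ↔ ν = 0 := by
    have h0 : μ.real univ = ν.real univ := by simpa only [mgf_zero'] using congr_fun hmgf 0
    rw [← Measure.measure_univ_eq_zero, ← Measure.measure_univ_eq_zero, ← measureReal_eq_zero_iff,
      ← measureReal_eq_zero_iff, h0]
  exact Measure.ext_of_complexMGF_id_eq <| funext fun z =>
    eqOn_complexMGF_of_mgf' hmgf hzero (by simp [hμ])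

section withDensity

variable {μ : Measure ℝ} {p : ℝ → ℝ≥0}

theorem integrableExpSet_withDensity (hp : AEMeasurable p μ)
    (hexp : ∀ t, Integrable (fun x => exp (t * x) * p x) μ) :
    integrableExpSet id (μ.withDensity fun x => p x) = univ := by
  ext t
  simp only [integrableExpSet, mem_ofPred_eq, id, mem_univ, iff_true]
  rw [integrable_withDensity_iff_integrable_smul₀ hp]
  simpa [NNReal.smul_def, mul_comm] using hexp t

theorem mgf_withDensity (hp : AEMeasurable p μ) (t : ℝ) :
    mgf id (μ.withDensity fun x => p x) t = ∫ x, exp (t * x) * p x ∂μ := by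
  rw [mgf, integral_withDensity_eq_integral_smul₀ hp]
  simp [NNReal.smul_def, mul_comm]

end withDensity

theorem ae_eq_zero_of_integral_exp_mul_eq_zero {μ : Measure ℝ} {f : ℝ → ℝ}
    (hf : ∀ t, Integrable (fun x => exp (t * x) * f x) μ) {U : Set ℝ} (hU : IsOpen U)
    (hUne : U.Nonempty) (h0 : ∀ t ∈ U, ∫ x, exp (t * x) * f x ∂μ = 0) : f =ᵐ[μ] 0 := by
  have hfm : AEMeasurable f μ := by simpa using (hf 0).aemeasurable
  have hdom : ∀ g : ℝ → ℝ≥0, AEMeasurable g μ → (∀ x, (g x : ℝ) ≤ |f x|) →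
      ∀ t, Integrable (fun x => exp (t * x) * g x) μ := fun g hg hgf t =>
    (hf t).mono (by fun_prop) (ae_of_all _ fun x => by
      simpa [abs_mul] using mul_le_mul_of_nonneg_left (hgf x) (exp_pos (t * x)).le)
  set p : ℝ → ℝ≥0 := fun x => (f x).toNNReal
  set q : ℝ → ℝ≥0 := fun x => (-f x).toNNReal
  have hpm : AEMeasurable p μ := hfm.real_toNNReal
  have hqm : AEMeasurable q μ := hfm.neg.real_toNNReal
  have hpi := hdom p hpm fun x => by simp [p, le_abs_self]
  have hqi := hdom q hqm fun x => by simp [q, neg_le_abs]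
  have : IsFiniteMeasure (μ.withDensity fun x => p x) :=
    isFiniteMeasure_withDensity (by simpa using (hpi 0).lintegral_lt_top.ne)
  have : IsFiniteMeasure (μ.withDensity fun x => q x) :=
    isFiniteMeasure_withDensity (by simpa using (hqi 0).lintegral_lt_top.ne)
  have hpq : μ.withDensity (fun x => p x) = μ.withDensity (fun x => q x) := by
    refine Measure.ext_of_mgf_eqOn (integrableExpSet_withDensity hpm hpi)
      (integrableExpSet_withDensity hqm hqi) hU hUne fun t ht => ?_
    rw [mgf_withDensity hpm, mgf_withDensity hqm, ← sub_eq_zero, ← integral_sub (hpi t) (hqi t)]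
    simpa [p, q, ← mul_sub, max_zero_sub_max_neg_zero_eq_self] using h0 t ht
  rw [withDensity_eq_iff hpm.coe_nnreal_ennreal hqm.coe_nnreal_ennreal
    (by simpa using measure_ne_top (μ.withDensity fun x => (p x : ℝ≥0∞)) univ)] at hpq
  filter_upwards [hpq] with x hx
  have h := congrArg ((↑) : ℝ≥0 → ℝ) (ENNReal.coe_inj.1 hx)
  simp only [p, q, Real.coe_toNNReal'] at h
  rw [Pi.zero_apply, ← max_zero_sub_max_neg_zero_eq_self (f x), h, sub_self]

theorem stdNormalPDF_pos (v : ℝ) : 0 < stdNormalPDF v := by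
  unfold stdNormalPDF; positivity

theorem stdNormalPDF_sub_eq_gaussianPDFReal (v c : ℝ) :
    stdNormalPDF (v - c) = gaussianPDFReal c 1 v := by
  simp [stdNormalPDF, gaussianPDFReal]

theorem exp_mul_mul_stdNormalPDF (t v : ℝ) :
    exp (t * v) * stdNormalPDF v = exp (t ^ 2 / 2) * stdNormalPDF (v - t) := by
  simp only [stdNormalPDF]
  rw [mul_left_comm, ← exp_add, mul_left_comm, ← exp_add]
  ring_nf

theorem integrable_mul_stdNormalPDF_sub {h : ℝ → ℝ} (hm : AEStronglyMeasurable h) {C : ℝ}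
    (hb : ∀ v, |h v| ≤ C) (c : ℝ) : Integrable fun v => h v * stdNormalPDF (v - c) := by
  simp_rw [stdNormalPDF_sub_eq_gaussianPDFReal]
  exact (integrable_gaussianPDFReal c 1).bdd_mul hm (ae_of_all _ hb)

theorem ae_eq_zero_of_integral_mul_stdNormalPDF_sub_eq_zero {h : ℝ → ℝ}
    (hm : AEStronglyMeasurable h) {C : ℝ} (hb : ∀ v, |h v| ≤ C) {U : Set ℝ} (hU : IsOpen U)
    (hUne : U.Nonempty) (h0 : ∀ c ∈ U, ∫ v, h v * stdNormalPDF (v - c) = 0) :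
    h =ᵐ[volume] 0 := by
  have tilt (t v : ℝ) :
      exp (t * v) * (h v * stdNormalPDF v) = exp (t ^ 2 / 2) * (h v * stdNormalPDF (v - t)) := by
    rw [mul_left_comm, exp_mul_mul_stdNormalPDF, mul_left_comm]
  have hφh : (fun v => h v * stdNormalPDF v) =ᵐ[volume] 0 := by
    refine ae_eq_zero_of_integral_exp_mul_eq_zero (fun t => ?_) hU hUne fun t ht => ?_
    · simp_rw [tilt]
      exact (integrable_mul_stdNormalPDF_sub hm hb t).const_mul _
    · simp_rw [tilt]
      rw [integral_const_mul, h0 t ht, mul_zero]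
  filter_upwards [hφh] with v hv
  exact (mul_eq_zero.1 hv).resolve_right (stdNormalPDF_pos v).ne'

theorem bundles_identification_along_rays_general
    {J : ℕ}
    (F G : (Bundle J → ℝ) → ℝ) (hFm : Measurable F) (hGm : Measurable G)
    (hFb : ∃ C : ℝ, ∀ g, |F g| ≤ C) (hGb : ∃ C : ℝ, ∀ g, |G g| ≤ C)
    (β₀ β₁ : ℝ) (hβ₁ : β₁ ≠ 0)
    (Z₂ : Set (Fin J → ℝ)) (Z₁ : Set ℝ) (hZ₁ : (interior Z₁).Nonempty)
    (heq : ∀ z₁ ∈ Z₁, ∀ z₂ ∈ Z₂,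
      ∫ v : ℝ, F (fun y : Bundle J => -v * bundleSum y.1 z₂) *
          stdNormalPDF (v - β₀ - β₁ * z₁) =
        ∫ v : ℝ, G (fun y : Bundle J => -v * bundleSum y.1 z₂) *
          stdNormalPDF (v - β₀ - β₁ * z₁)) :
    ∀ z₂ ∈ Z₂, ∀ᵐ v : ℝ ∂volume,
      F (fun y : Bundle J => -v * bundleSum y.1 z₂) =
        G (fun y : Bundle J => -v * bundleSum y.1 z₂) := by
  intro z₂ hz₂
  obtain ⟨CF, hCF⟩ := hFb
  obtain ⟨CG, hCG⟩ := hGb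
  set A : ℝ → Bundle J → ℝ := fun v y => -v * bundleSum y.1 z₂
  have hA : Measurable A := measurable_pi_lambda _ fun y => by fun_prop
  have hFA : Measurable fun v => F (A v) := hFm.comp hA
  have hGA : Measurable fun v => G (A v) := hGm.comp hA
  set U : Set ℝ := (fun c => (c - β₀) / β₁) ⁻¹' interior Z₁
  have hU : IsOpen U := isOpen_interior.preimage (by fun_prop)
  have hUne : U.Nonempty := by
    obtain ⟨z, hz⟩ := hZ₁
    exact ⟨β₀ + β₁ * z, by simpa [U, hβ₁] using hz⟩
  have h0 : ∀ c ∈ U, ∫ v, (F (A v) - G (A v)) * stdNormalPDF (v - c) = 0 := by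
    intro c hc
    have hc' : β₀ + β₁ * ((c - β₀) / β₁) = c := by field_simp; ring
    have := heq _ (interior_subset hc) z₂ hz₂
    simp only [sub_sub, hc'] at this
    simp_rw [sub_mul]
    rw [integral_sub
      (integrable_mul_stdNormalPDF_sub hFA.aestronglyMeasurable (fun v => hCF (A v)) c)
      (integrable_mul_stdNormalPDF_sub hGA.aestronglyMeasurable (fun v => hCG (A v)) c),
      this, sub_self]
  have hbound : ∀ v, |F (A v) - G (A v)| ≤ CF + CG := fun v =>
    (abs_sub _ _).trans (add_le_add (hCF _) (hCG _))
  filter_upwards [ae_eq_zero_of_integral_mul_stdNormalPDF_sub_eq_zero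
    (hFA.sub hGA).aestronglyMeasurable hbound hU hUne h0] with v hv
  exact sub_eq_zero.1 hv

/-- core of Proposition 4(ii), bundles model: once the index
coefficients are identified, variation in the Gaussian index identifies the
joint structural function of the bundle-specific shocks along the directions
generated by the characteristics `z₂ ∈ Z₂`. -/
theorem bundles_identification_along_rays
    {J : ℕ} (hJ : 1 ≤ J)
    (F G : (Bundle J → ℝ) → ℝ) (hFm : Measurable F) (hGm : Measurable G)
    (hFb : ∃ C : ℝ, ∀ g, |F g| ≤ C) (hGb : ∃ C : ℝ, ∀ g, |G g| ≤ C)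
    (β₀ β₁ : ℝ) (hβ₁ : β₁ ≠ 0)
    (Z₂ : Set (Fin J → ℝ)) (Z₁ : Set ℝ) (hZ₁ : (interior Z₁).Nonempty)
    (heq : ∀ z₁ ∈ Z₁, ∀ z₂ ∈ Z₂,
      ∫ v : ℝ, F (fun y : Bundle J => -v * bundleSum y.1 z₂) *
          stdNormalPDF (v - β₀ - β₁ * z₁) =
        ∫ v : ℝ, G (fun y : Bundle J => -v * bundleSum y.1 z₂) *
          stdNormalPDF (v - β₀ - β₁ * z₁)) :
    ∀ z₂ ∈ Z₂, ∀ᵐ v : ℝ ∂volume,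
      F (fun y : Bundle J => -v * bundleSum y.1 z₂) =
        G (fun y : Bundle J => -v * bundleSum y.1 z₂) :=
  bundles_identification_along_rays_general F G hFm hGm hFb hGb β₀ β₁ hβ₁ Z₂ Z₁ hZ₁ heq
end
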